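/- arXiv:1412.3154 — 8 statements merged into one kernel-verified Lean document; each statement's English description precedes it below -/
import Mathlib

section
/- Let V, V' be finite-dimensional vector spaces with β ∈ S²V, β' ∈ S²V', and Φ : V → V' a linear map with Φ(β) = β' (i.e. β'(μ,ν) = β(Φ*μ, Φ*ν) for all μ,ν ∈ V'*). If U' ⊆ V' is a subspace, then Φ⁻¹(U') is β-coisotropic if and only if U' is β'-coisotropic. -/
/-- If `Φ : V → V'` is linear with `Φ(β) = β'` (pushforward of the elements of `S²V`,
viewed as symmetric bilinear forms on the duals), and `U' ⊆ V'` is a subspace,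
then `Φ⁻¹(U')` is `β`-coisotropic if and only if `U'` is `β'`-coisotropic. -/
theorem stmt1 {K V V' : Type*} [Field K]
    [AddCommGroup V] [Module K V] [FiniteDimensional K V]
    [AddCommGroup V'] [Module K V'] [FiniteDimensional K V']
    (β : LinearMap.BilinForm K (Module.Dual K V))
    (β' : LinearMap.BilinForm K (Module.Dual K V'))
    (hβsymm : ∀ μ ν, β μ ν = β ν μ)
    (hβ'symm : ∀ μ ν, β' μ ν = β' ν μ)
    (Φ : V →ₗ[K] V')
    (hpush : ∀ μ ν : Module.Dual K V', β' μ ν = β (Φ.dualMap μ) (Φ.dualMap ν))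
    (U' : Submodule K V') :
    (∀ μ ∈ (U'.comap Φ).dualAnnihilator, ∀ ν ∈ (U'.comap Φ).dualAnnihilator, β μ ν = 0) ↔
      (∀ μ ∈ U'.dualAnnihilator, ∀ ν ∈ U'.dualAnnihilator, β' μ ν = 0) := by
  have hker : U'.comap Φ = LinearMap.ker (U'.mkQ.comp Φ) := by
    ext x; simp [LinearMap.mem_ker, Submodule.Quotient.mk_eq_zero]
  have key : (U'.comap Φ).dualAnnihilator = U'.dualAnnihilator.map Φ.dualMap := by
    rw [hker, ← LinearMap.range_dualMap_eq_dualAnnihilator_ker,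
      ← LinearMap.dualMap_comp_dualMap, LinearMap.range_comp,
      Submodule.range_dualMap_mkQ_eq]
  rw [key]
  constructor
  · rintro h μ hμ ν hν
    rw [hpush]
    exact h _ ⟨μ, hμ, rfl⟩ _ ⟨ν, hν, rfl⟩
  · rintro h _ ⟨μ, hμ, rfl⟩ _ ⟨ν, hν, rfl⟩
    rw [← hpush]
    exact h _ hμ _ hν
end

section
/- Let 𝔡 be a Lie algebra with ad-invariant β ∈ S²𝔡, and let 𝔡̃ = 𝔡 ⋉ 𝔡*_β be the semidirect product Lie algebra. The symmetric bilinear form on 𝔡̃ defined by ⟨λ₁+μ₁, λ₂+μ₂⟩ = ⟨λ₁,μ₂⟩ + ⟨λ₂,μ₁⟩ + β(μ₁,μ₂) (for λᵢ ∈ 𝔡, μᵢ ∈ 𝔡*) is nondegenerate and ad-invariant, making 𝔡̃ a metrized Lie algebra. -/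
/-- The coadjoint action: `⟨ad*_x μ, y⟩ = −⟨μ, [x,y]⟩`. -/
noncomputable def coad (K : Type*) [Field K] (𝔡 : Type*) [LieRing 𝔡] [LieAlgebra K 𝔡]
    (x : 𝔡) (μ : Module.Dual K 𝔡) : Module.Dual K 𝔡 :=
  -(μ.comp (LieAlgebra.ad K 𝔡 x : 𝔡 →ₗ[K] 𝔡))

/-- On the semidirect product `𝔡̃ = 𝔡 ⋉ 𝔡*_β`, the symmetric bilinear form
`⟨λ₁+μ₁, λ₂+μ₂⟩ = ⟨λ₁,μ₂⟩ + ⟨λ₂,μ₁⟩ + β(μ₁,μ₂)` is symmetric, nondegenerate, and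
ad-invariant, making `𝔡̃` a metrized Lie algebra. -/
theorem stmt6 {K 𝔡 : Type*} [Field K] [LieRing 𝔡] [LieAlgebra K 𝔡] [FiniteDimensional K 𝔡]
    (β : LinearMap.BilinForm K (Module.Dual K 𝔡))
    (hβsymm : ∀ μ ν, β μ ν = β ν μ)
    (hβinv : ∀ (x : 𝔡) μ ν, β (coad K 𝔡 x μ) ν + β μ (coad K 𝔡 x ν) = 0)
    (βsharp : Module.Dual K 𝔡 →ₗ[K] 𝔡)
    (hβsharp : ∀ μ ν, ν (βsharp μ) = β μ ν) :
    let b : Module.Dual K 𝔡 → Module.Dual K 𝔡 → Module.Dual K 𝔡 :=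
      fun μ ν => coad K 𝔡 (βsharp μ) ν
    let Br : 𝔡 × Module.Dual K 𝔡 → 𝔡 × Module.Dual K 𝔡 → 𝔡 × Module.Dual K 𝔡 :=
      fun p q => (⁅p.1, q.1⁆, coad K 𝔡 p.1 q.2 - coad K 𝔡 q.1 p.2 + b p.2 q.2)
    let Bt : 𝔡 × Module.Dual K 𝔡 → 𝔡 × Module.Dual K 𝔡 → K :=
      fun p q => q.2 p.1 + p.2 q.1 + β p.2 q.2
    (∀ p q, Bt p q = Bt q p)
    ∧ (∀ p, (∀ q, Bt p q = 0) → p = 0)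
    ∧ (∀ p q r, Bt (Br p q) r + Bt q (Br p r) = 0) := by
  intro b Br Bt
  have hcoad : ∀ (x : 𝔡) (μ : Module.Dual K 𝔡) (y : 𝔡), coad K 𝔡 x μ y = -(μ ⁅x, y⁆) := by
    intro x μ y
    simp [coad, LieAlgebra.ad_apply]
  refine ⟨?_, ?_, ?_⟩
  · intro p q
    simp only [Bt, hβsymm p.2 q.2]
    ring
  · rintro ⟨x, μ⟩ h
    have hμ : μ = 0 := by
      ext y
      have := h (y, 0)
      simpa [Bt] using this
    have hx : x = 0 := by
      have h2 : ∀ ν : Module.Dual K 𝔡, ν x = 0 := by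
        intro ν
        have := h (0, ν)
        simpa [Bt, hμ] using this
      exact (Module.forall_dual_apply_eq_zero_iff K x).mp h2
    simp [hx, hμ]
  · rintro ⟨x, μ⟩ ⟨y, ν⟩ ⟨z, ρ⟩
    simp only [Bt, Br, b, LinearMap.add_apply, LinearMap.sub_apply, map_add, map_sub,
      LinearMap.map_add₂, LinearMap.map_sub₂, hcoad]
    have h1 := hβinv x ν ρ
    have h2 := hβinv (βsharp μ) ν ρ
    have h3 : β (coad K 𝔡 y μ) ρ = ρ ⁅y, βsharp μ⁆ := by
      have := hβinv y μ ρ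
      have h4 : β μ (coad K 𝔡 y ρ) = -(ρ ⁅y, βsharp μ⁆) := by
        rw [← hβsharp μ (coad K 𝔡 y ρ), hcoad]
      linear_combination this - h4
    have h5 : β (coad K 𝔡 z μ) ν = ν ⁅z, βsharp μ⁆ := by
      have := hβinv z μ ν
      have h6 : β μ (coad K 𝔡 z ν) = -(ν ⁅z, βsharp μ⁆) := by
        rw [← hβsharp μ (coad K 𝔡 z ν), hcoad]
      linear_combination this - h6
    have h7 : β ν (coad K 𝔡 z μ) = ν ⁅z, βsharp μ⁆ := by rw [hβsymm, h5]
    have h8 : μ ⁅z, y⁆ = -(μ ⁅y, z⁆) := by rw [← map_neg, lie_skew]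
    have h9 : ν ⁅βsharp μ, z⁆ = -(ν ⁅z, βsharp μ⁆) := by rw [← map_neg, lie_skew]
    have h10 : ρ ⁅βsharp μ, y⁆ = -(ρ ⁅y, βsharp μ⁆) := by rw [← map_neg, lie_skew]
    linear_combination h1 + h2 - h3 - h7 + h8 - h9 - h10
end

section
/- Let 𝔡̃ = 𝔡 ⋉ 𝔡*_β with its canonical metric as above, and let β̃ ∈ S²𝔡̃ be the element dual to the metric. The maps s(λ+μ) = λ and t(λ+μ) = λ + β^♯(μ) from 𝔡̃ to 𝔡 satisfy s(β̃) = −β and t(β̃) = β (pushforwards of the dual element). -/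
/-- Let `𝔡̃ = 𝔡 ⋉ 𝔡*_β` carry the metric `⟨λ₁+μ₁,λ₂+μ₂⟩ = ⟨λ₁,μ₂⟩+⟨λ₂,μ₁⟩+β(μ₁,μ₂)`,
and let `β̃ ∈ S²𝔡̃` be the element dual to the metric (encoded by the inverse-metric map
`J : 𝔡̃* → 𝔡̃` with `⟨J φ, p⟩ = φ(p)`, via `β̃(φ,ψ) = ψ(J φ)`).  The maps
`s(λ+μ) = λ` and `t(λ+μ) = λ + β^♯(μ)` satisfy `s(β̃) = −β` and `t(β̃) = β`. -/
theorem stmt7 {K 𝔡 : Type*} [Field K] [AddCommGroup 𝔡] [Module K 𝔡] [FiniteDimensional K 𝔡]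
    (β : LinearMap.BilinForm K (Module.Dual K 𝔡))
    (hβsymm : ∀ μ ν, β μ ν = β ν μ)
    (βsharp : Module.Dual K 𝔡 →ₗ[K] 𝔡)
    (hβsharp : ∀ μ ν, ν (βsharp μ) = β μ ν)
    (J : Module.Dual K (𝔡 × Module.Dual K 𝔡) → 𝔡 × Module.Dual K 𝔡)
    (hJ : ∀ φ p, (p.2 (J φ).1 + (J φ).2 p.1 + β (J φ).2 p.2) = φ p) :
    let βt : Module.Dual K (𝔡 × Module.Dual K 𝔡) →
        Module.Dual K (𝔡 × Module.Dual K 𝔡) → K := fun φ ψ => ψ (J φ)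
    let s : 𝔡 × Module.Dual K 𝔡 →ₗ[K] 𝔡 := LinearMap.fst K 𝔡 (Module.Dual K 𝔡)
    let t : 𝔡 × Module.Dual K 𝔡 →ₗ[K] 𝔡 :=
      LinearMap.fst K 𝔡 (Module.Dual K 𝔡) +
        βsharp.comp (LinearMap.snd K 𝔡 (Module.Dual K 𝔡))
    (∀ ν₁ ν₂ : Module.Dual K 𝔡, βt (s.dualMap ν₁) (s.dualMap ν₂) = -β ν₁ ν₂)
    ∧ (∀ ν₁ ν₂ : Module.Dual K 𝔡, βt (t.dualMap ν₁) (t.dualMap ν₂) = β ν₁ ν₂) := by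
  intro βt s t
  constructor
  · intro ν₁ ν₂
    set x := (J (s.dualMap ν₁)).1 with hx
    set μ := (J (s.dualMap ν₁)).2 with hμdef
    have hμ : μ = ν₁ := by
      ext q
      have := hJ (s.dualMap ν₁) (q, 0)
      simpa [s, ← hx, ← hμdef] using this
    have h2 := hJ (s.dualMap ν₁) (0, ν₂)
    simp only [s, ← hx, ← hμdef, hμ, LinearMap.dualMap_apply, LinearMap.fst_apply,
      map_zero, add_zero, zero_add] at h2
    simp only [βt, s, LinearMap.dualMap_apply, LinearMap.fst_apply, ← hx]
    linear_combination h2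
  · intro ν₁ ν₂
    set x := (J (t.dualMap ν₁)).1 with hx
    set μ := (J (t.dualMap ν₁)).2 with hμdef
    have hμ : μ = ν₁ := by
      ext q
      have := hJ (t.dualMap ν₁) (q, 0)
      simpa [t, ← hx, ← hμdef] using this
    have h2 := hJ (t.dualMap ν₁) (0, ν₂)
    simp only [t, ← hx, ← hμdef, hμ, LinearMap.dualMap_apply, LinearMap.add_apply,
      LinearMap.comp_apply, LinearMap.fst_apply, LinearMap.snd_apply, map_zero, add_zero,
      zero_add, hβsharp] at h2
    have hx2 : ν₂ x = 0 := by
      have h3 := hβsymm ν₁ ν₂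
      linear_combination h2 - h3
    simp only [βt, t, LinearMap.dualMap_apply, LinearMap.add_apply, LinearMap.comp_apply,
      LinearMap.fst_apply, LinearMap.snd_apply, ← hx, ← hμdef, hμ, map_add, hβsharp, hx2,
      zero_add]
end

section
/- Let 𝔡 be a Lie algebra with ad-invariant β ∈ S²𝔡, and let 𝔤 ⊆ 𝔡 be a β-coisotropic Lie subalgebra. Then the preimage s⁻¹(𝔤) = 𝔤 ⋉ 𝔡*_β inside 𝔡̃ = 𝔡 ⋉ 𝔡*_β is a β̃-coisotropic Lie subalgebra, where s(λ+μ)=λ. -/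
/-- If `𝔤 ⊆ 𝔡` is a `β`-coisotropic Lie subalgebra, then the preimage
`s⁻¹(𝔤) = 𝔤 ⋉ 𝔡*_β` inside `𝔡̃ = 𝔡 ⋉ 𝔡*_β` is a `β̃`-coisotropic Lie subalgebra,
where `s(λ+μ) = λ` and `β̃ ∈ S²𝔡̃` is dual to the canonical metric on `𝔡̃`. -/
theorem stmt8 {K 𝔡 : Type*} [Field K] [LieRing 𝔡] [LieAlgebra K 𝔡] [FiniteDimensional K 𝔡]
    (β : LinearMap.BilinForm K (Module.Dual K 𝔡))
    (hβsymm : ∀ μ ν, β μ ν = β ν μ)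
    (hβinv : ∀ (x : 𝔡) μ ν, β (coad K 𝔡 x μ) ν + β μ (coad K 𝔡 x ν) = 0)
    (βsharp : Module.Dual K 𝔡 →ₗ[K] 𝔡)
    (hβsharp : ∀ μ ν, ν (βsharp μ) = β μ ν)
    (J : Module.Dual K (𝔡 × Module.Dual K 𝔡) → 𝔡 × Module.Dual K 𝔡)
    (hJ : ∀ φ p, (p.2 (J φ).1 + (J φ).2 p.1 + β (J φ).2 p.2) = φ p)
    (G : Submodule K 𝔡)
    (hGsub : ∀ x ∈ G, ∀ y ∈ G, ⁅x, y⁆ ∈ G)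
    (hGcoiso : ∀ μ ∈ G.dualAnnihilator, ∀ ν ∈ G.dualAnnihilator, β μ ν = 0) :
    let b : Module.Dual K 𝔡 → Module.Dual K 𝔡 → Module.Dual K 𝔡 :=
      fun μ ν => coad K 𝔡 (βsharp μ) ν
    let Br : 𝔡 × Module.Dual K 𝔡 → 𝔡 × Module.Dual K 𝔡 → 𝔡 × Module.Dual K 𝔡 :=
      fun p q => (⁅p.1, q.1⁆, coad K 𝔡 p.1 q.2 - coad K 𝔡 q.1 p.2 + b p.2 q.2)
    let βt : Module.Dual K (𝔡 × Module.Dual K 𝔡) →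
        Module.Dual K (𝔡 × Module.Dual K 𝔡) → K := fun φ ψ => ψ (J φ)
    let W : Submodule K (𝔡 × Module.Dual K 𝔡) :=
      Submodule.comap (LinearMap.fst K 𝔡 (Module.Dual K 𝔡)) G
    (∀ p ∈ W, ∀ q ∈ W, Br p q ∈ W)
    ∧ (∀ φ ∈ W.dualAnnihilator, ∀ ψ ∈ W.dualAnnihilator, βt φ ψ = 0) := by
  intro b Br βt W
  have hWmem : ∀ p : 𝔡 × Module.Dual K 𝔡, p ∈ W ↔ p.1 ∈ G := by
    intro p; simp [W, Submodule.mem_comap]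
  constructor
  · intro p hp q hq
    rw [hWmem] at hp hq ⊢
    exact hGsub p.1 hp q.1 hq
  · intro φ hφ ψ hψ
    rw [Submodule.mem_dualAnnihilator] at hφ hψ
    have hφ2 : (J φ).2 ∈ G.dualAnnihilator := by
      rw [Submodule.mem_dualAnnihilator]
      intro x hx
      have h := hJ φ (x, (0 : Module.Dual K 𝔡))
      simp only [LinearMap.zero_apply, map_zero, zero_add, add_zero] at h
      rw [h]
      exact hφ (x, 0) ((hWmem _).2 hx)
    have hψ2 : (J ψ).2 ∈ G.dualAnnihilator := by
      rw [Submodule.mem_dualAnnihilator]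
      intro x hx
      have h := hJ ψ (x, (0 : Module.Dual K 𝔡))
      simp only [LinearMap.zero_apply, map_zero, zero_add, add_zero] at h
      rw [h]
      exact hψ (x, 0) ((hWmem _).2 hx)
    -- key: (Jψ).2 (Jφ).1 = -β (Jφ).2 (Jψ).2 = 0
    have hkey : (J ψ).2 (J φ).1 = 0 := by
      have h := hJ φ ((0 : 𝔡), (J ψ).2)
      simp only [map_zero, add_zero, zero_add] at h
      have h0 : φ ((0 : 𝔡), (J ψ).2) = 0 := hφ _ ((hWmem _).2 (Submodule.zero_mem G))
      have hb : β (J φ).2 (J ψ).2 = 0 := hGcoiso _ hφ2 _ hψ2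
      -- h : (J ψ).2 (J φ).1 + β (J φ).2 (J ψ).2 = φ (0, (Jψ).2)
      rw [h0, hb, add_zero] at h
      exact h
    have hsplit : (J φ) = ((J φ).1, (0 : Module.Dual K 𝔡)) + ((0 : 𝔡), (J φ).2) := by
      ext <;> simp
    have h1 : ψ ((J φ).1, (0 : Module.Dual K 𝔡)) = 0 := by
      have h := hJ ψ ((J φ).1, (0 : Module.Dual K 𝔡))
      simp only [LinearMap.zero_apply, map_zero, zero_add, add_zero] at h
      rw [← h, hkey]
    have h2 : ψ ((0 : 𝔡), (J φ).2) = 0 := hψ _ ((hWmem _).2 (Submodule.zero_mem G))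
    show ψ (J φ) = 0
    rw [hsplit, map_add, h1, h2, add_zero]
end

section
/- Let 𝔡 be a Lie algebra, 𝔤, 𝔥 ⊆ 𝔡 Lie subalgebras with 𝔡 = 𝔤 ⊕ 𝔥 as vector spaces, and let pr_𝔥 : 𝔡 → 𝔥 be the projection along 𝔤. For a Lie group H with Lie algebra 𝔥 acting on 𝔡 by Lie algebra automorphisms Ad_h extending the adjoint action of 𝔥, the formula ρ(λ)_h = Ad_{h⁻¹}(pr_𝔥(Ad_h λ)) (in left trivialization TH = H × 𝔥) defines a Lie algebra action of 𝔡 on H, i.e. ρ : 𝔡 → Γ(TH) is a Lie algebra homomorphism, and it extends the action τ ↦ τ^L of 𝔥 by left-invariant vector fields. -/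
/-- Dressing action.  Let `(𝔡, H)` be a Harish-Chandra pair: the Lie group `H` (with Lie
algebra `𝔥`) acts on the Lie algebra `𝔡` by Lie algebra automorphisms `Ad_h` extending the
adjoint action of `𝔥 ⊆ 𝔡`, and `𝔤, 𝔥 ⊆ 𝔡` are Lie subalgebras with `𝔡 = 𝔤 ⊕ 𝔥`.
Vector fields on `H` are represented in left trivialization `TH = H × 𝔥` as functions
`H → 𝔥`; the operator `D τ f` is the directional derivative of `f` along the left-invariant
vector field `τ^L` (its axioms encode that the differential of the `H`-action on `𝔡` is the
adjoint action of `𝔥`, together with the Leibniz rules), and the Lie bracket of vector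
fields `X, Y : H → 𝔥` in left trivialization is
`⁅X,Y⁆(h) = (D_{X(h)} Y)(h) − (D_{Y(h)} X)(h) + ⁅X(h), Y(h)⁆`.
Conclusion: `ρ(λ)_h = Ad_{h⁻¹}(pr_𝔥(Ad_h λ))` restricts to `τ ↦ τ^L` on `𝔥` and is a Lie
algebra homomorphism `𝔡 → Γ(TH)`. -/
theorem stmt10 {K 𝔡 H : Type*} [Field K] [LieRing 𝔡] [LieAlgebra K 𝔡] [Group H]
    (Ad : H → 𝔡 →ₗ[K] 𝔡)
    (hAd1 : Ad 1 = LinearMap.id)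
    (hAdmul : ∀ g h, Ad (g * h) = (Ad g).comp (Ad h))
    (hAdbr : ∀ (h : H) (x y : 𝔡), Ad h ⁅x, y⁆ = ⁅Ad h x, Ad h y⁆)
    (𝔤 𝔥 : Submodule K 𝔡)
    (h𝔤br : ∀ x ∈ 𝔤, ∀ y ∈ 𝔤, ⁅x, y⁆ ∈ 𝔤)
    (h𝔥br : ∀ x ∈ 𝔥, ∀ y ∈ 𝔥, ⁅x, y⁆ ∈ 𝔥)
    (hcompl : IsCompl 𝔤 𝔥)
    (hAd𝔥 : ∀ (h : H), ∀ x ∈ 𝔥, Ad h x ∈ 𝔥)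
    (pr𝔥 : 𝔡 →ₗ[K] 𝔡)
    (hpr_mem : ∀ x, pr𝔥 x ∈ 𝔥)
    (hpr_id : ∀ x ∈ 𝔥, pr𝔥 x = x)
    (hpr_ker : ∀ x ∈ 𝔤, pr𝔥 x = 0)
    (D : 𝔡 → (H → 𝔡) → H → 𝔡)
    (hD_add : ∀ τ f g, D τ (f + g) = D τ f + D τ g)
    (hD_lin1 : ∀ τ₁ τ₂ f, D (τ₁ + τ₂) f = D τ₁ f + D τ₂ f)
    (hD_smul1 : ∀ (c : K) τ f, D (c • τ) f = c • D τ f)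
    (hD_Ad : ∀ τ ∈ 𝔥, ∀ lam : 𝔡, D τ (fun h => Ad h lam) = fun h => Ad h ⁅τ, lam⁆)
    (hD_inv : ∀ τ ∈ 𝔥, ∀ c : H → 𝔡,
      D τ (fun h => Ad h⁻¹ (c h)) = fun h => Ad h⁻¹ (D τ c h) - ⁅τ, Ad h⁻¹ (c h)⁆)
    (hD_comp : ∀ (τ : 𝔡) (L : 𝔡 →ₗ[K] 𝔡) (c : H → 𝔡),
      D τ (fun h => L (c h)) = fun h => L (D τ c h)) :
    let ρ : 𝔡 → H → 𝔡 := fun lam h => Ad h⁻¹ (pr𝔥 (Ad h lam))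
    -- ρ extends the action of 𝔥 by left-invariant vector fields
    (∀ τ ∈ 𝔥, ρ τ = fun _ => τ)
    -- ρ takes values in vector fields: ρ(λ)_h ∈ 𝔥
    ∧ (∀ (lam : 𝔡) (h : H), ρ lam h ∈ 𝔥)
    -- ρ is a Lie algebra homomorphism into vector fields on H
    ∧ (∀ lam₁ lam₂ : 𝔡,
        (fun h => D (ρ lam₁ h) (ρ lam₂) h - D (ρ lam₂ h) (ρ lam₁) h + ⁅ρ lam₁ h, ρ lam₂ h⁆)
          = ρ ⁅lam₁, lam₂⁆) := by
  intro ρ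
  have hinv1 : ∀ (h : H) (x : 𝔡), Ad h⁻¹ (Ad h x) = x := by
    intro h x
    have : Ad (h⁻¹ * h) x = ((Ad h⁻¹).comp (Ad h)) x := by rw [hAdmul]
    rw [inv_mul_cancel, hAd1] at this
    simpa using this.symm
  have hinv2 : ∀ (h : H) (x : 𝔡), Ad h (Ad h⁻¹ x) = x := by
    intro h x
    have : Ad (h * h⁻¹) x = ((Ad h).comp (Ad h⁻¹)) x := by rw [hAdmul]
    rw [mul_inv_cancel, hAd1] at this
    simpa using this.symm
  have hg : ∀ x : 𝔡, x - pr𝔥 x ∈ 𝔤 := by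
    intro x
    have hx : x ∈ 𝔤 ⊔ 𝔥 := by rw [hcompl.sup_eq_top]; trivial
    rcases Submodule.mem_sup.mp hx with ⟨g, hgmem, t, htmem, rfl⟩
    have : pr𝔥 (g + t) = t := by rw [map_add, hpr_ker g hgmem, hpr_id t htmem, zero_add]
    rw [this]; simpa using hgmem
  have key : ∀ μ₁ μ₂ : 𝔡,
      pr𝔥 ⁅pr𝔥 μ₁, μ₂⁆ - pr𝔥 ⁅pr𝔥 μ₂, μ₁⁆ - ⁅pr𝔥 μ₁, pr𝔥 μ₂⁆ = pr𝔥 ⁅μ₁, μ₂⁆ := by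
    intro μ₁ μ₂
    have hππ : pr𝔥 ⁅pr𝔥 μ₁, pr𝔥 μ₂⁆ = ⁅pr𝔥 μ₁, pr𝔥 μ₂⁆ :=
      hpr_id _ (h𝔥br _ (hpr_mem μ₁) _ (hpr_mem μ₂))
    have hγγ : pr𝔥 ⁅μ₁ - pr𝔥 μ₁, μ₂ - pr𝔥 μ₂⁆ = 0 :=
      hpr_ker _ (h𝔤br _ (hg μ₁) _ (hg μ₂))
    have expand : ⁅μ₁, μ₂⁆ =
        ⁅μ₁ - pr𝔥 μ₁, μ₂ - pr𝔥 μ₂⁆ + ⁅μ₁ - pr𝔥 μ₁, pr𝔥 μ₂⁆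
          + ⁅pr𝔥 μ₁, μ₂ - pr𝔥 μ₂⁆ + ⁅pr𝔥 μ₁, pr𝔥 μ₂⁆ := by
      simp only [sub_lie, lie_sub]; abel
    have e1 : pr𝔥 ⁅pr𝔥 μ₁, μ₂⁆ = pr𝔥 ⁅pr𝔥 μ₁, μ₂ - pr𝔥 μ₂⁆ + ⁅pr𝔥 μ₁, pr𝔥 μ₂⁆ := by
      rw [lie_sub, map_sub, hππ]; abel
    have e2 : pr𝔥 ⁅pr𝔥 μ₂, μ₁⁆ = - pr𝔥 ⁅μ₁ - pr𝔥 μ₁, pr𝔥 μ₂⁆ - ⁅pr𝔥 μ₁, pr𝔥 μ₂⁆ := by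
      have : ⁅pr𝔥 μ₂, μ₁⁆ = - ⁅μ₁ - pr𝔥 μ₁, pr𝔥 μ₂⁆ - ⁅pr𝔥 μ₁, pr𝔥 μ₂⁆ := by
        simp only [sub_lie, lie_sub]
        rw [← lie_skew (pr𝔥 μ₂) μ₁]
        abel
      rw [this, map_sub, map_neg, hππ]
    rw [expand, e1, e2, map_add, map_add, map_add, hγγ, hππ]
    abel
  have hDρ : ∀ τ ∈ 𝔥, ∀ lam : 𝔡,
      D τ (ρ lam) = fun h' => Ad h'⁻¹ (pr𝔥 (Ad h' ⁅τ, lam⁆)) - ⁅τ, ρ lam h'⁆ := by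
    intro τ hτ lam
    have step : D τ (fun h' => pr𝔥 (Ad h' lam)) = fun h' => pr𝔥 (Ad h' ⁅τ, lam⁆) := by
      rw [hD_comp τ pr𝔥 (fun h' => Ad h' lam), hD_Ad τ hτ lam]
    have := hD_inv τ hτ (fun h' => pr𝔥 (Ad h' lam))
    rw [step] at this
    exact this
  refine ⟨?_, ?_, ?_⟩
  · intro τ hτ
    funext h
    show Ad h⁻¹ (pr𝔥 (Ad h τ)) = τ
    rw [hpr_id _ (hAd𝔥 h τ hτ), hinv1]
  · intro lam h
    exact hAd𝔥 h⁻¹ _ (hpr_mem _)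
  · intro lam₁ lam₂
    funext h
    have hτ₁ : ρ lam₁ h ∈ 𝔥 := hAd𝔥 h⁻¹ _ (hpr_mem _)
    have hτ₂ : ρ lam₂ h ∈ 𝔥 := hAd𝔥 h⁻¹ _ (hpr_mem _)
    have d12 : D (ρ lam₁ h) (ρ lam₂) h
        = Ad h⁻¹ (pr𝔥 ⁅pr𝔥 (Ad h lam₁), Ad h lam₂⁆) - ⁅ρ lam₁ h, ρ lam₂ h⁆ := by
      rw [hDρ _ hτ₁ lam₂]
      have : Ad h ⁅ρ lam₁ h, lam₂⁆ = ⁅pr𝔥 (Ad h lam₁), Ad h lam₂⁆ := by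
        rw [hAdbr]
        show ⁅Ad h (Ad h⁻¹ (pr𝔥 (Ad h lam₁))), Ad h lam₂⁆ = _
        rw [hinv2]
      simp only [this]
    have d21 : D (ρ lam₂ h) (ρ lam₁) h
        = Ad h⁻¹ (pr𝔥 ⁅pr𝔥 (Ad h lam₂), Ad h lam₁⁆) - ⁅ρ lam₂ h, ρ lam₁ h⁆ := by
      rw [hDρ _ hτ₂ lam₁]
      have : Ad h ⁅ρ lam₂ h, lam₁⁆ = ⁅pr𝔥 (Ad h lam₂), Ad h lam₁⁆ := by
        rw [hAdbr]
        show ⁅Ad h (Ad h⁻¹ (pr𝔥 (Ad h lam₂))), Ad h lam₁⁆ = _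
        rw [hinv2]
      simp only [this]
    have hbr : ⁅ρ lam₁ h, ρ lam₂ h⁆ = Ad h⁻¹ ⁅pr𝔥 (Ad h lam₁), pr𝔥 (Ad h lam₂)⁆ := by
      rw [hAdbr]
    have hbr' : ⁅ρ lam₂ h, ρ lam₁ h⁆ = - ⁅ρ lam₁ h, ρ lam₂ h⁆ :=
      (lie_skew _ _).symm
    show D (ρ lam₁ h) (ρ lam₂) h - D (ρ lam₂ h) (ρ lam₁) h + ⁅ρ lam₁ h, ρ lam₂ h⁆
        = Ad h⁻¹ (pr𝔥 (Ad h ⁅lam₁, lam₂⁆))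
    rw [d12, d21, hbr', hbr, hAdbr h lam₁ lam₂]
    rw [← key (Ad h lam₁) (Ad h lam₂), map_sub, map_sub]
    abel
end

section
/- Let Q be a vector space with a nondegenerate symmetric bilinear form ⟨·,·⟩, let 𝔯 ⊆ Q be a subspace, and 𝔤 ⊆ Q a subspace complementary to both 𝔯 and 𝔯^⊥. Define s(λ) = (1 − pr_{𝔯^⊥})(λ) and t(λ) = (1 − pr_𝔯)(λ), where pr_𝔯, pr_{𝔯^⊥} are the projections onto 𝔯, 𝔯^⊥ with kernel 𝔤, and define λ₁ ∘ λ₂ = λ₂ + pr_{𝔯^⊥}(λ₁) whenever s(λ₁) = t(λ₂). Then this composition is associative where defined, s(λ₁∘λ₂) = s(λ₂), t(λ₁∘λ₂) = t(λ₁), elements of 𝔤 act as units (ξ ∘ λ = λ when defined, for ξ ∈ 𝔤), and it satisfies ⟨λ₁∘λ₂, λ₁∘λ₂⟩ = ⟨λ₁,λ₁⟩ + ⟨λ₂,λ₂⟩. -/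
/-- The linear groupoid `Q ⇉ 𝔤`.  Let `Q` carry a nondegenerate symmetric bilinear form,
`𝔯 ⊆ Q` a subspace, and `𝔤 ⊆ Q` a (Lagrangian, as for the groupoid `𝔮 ⇉ 𝔤` of a Dirac
Lie group) subspace complementary to both `𝔯` and `𝔯^⊥`; `pr_𝔯, pr_{𝔯^⊥}` are the
projections onto `𝔯, 𝔯^⊥` with kernel `𝔤`.  With `s = 1 − pr_{𝔯^⊥}`, `t = 1 − pr_𝔯`
and `λ₁ ∘ λ₂ = λ₂ + pr_{𝔯^⊥}(λ₁)` for `s(λ₁) = t(λ₂)`:  the composition is associative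
where defined, satisfies `s(λ₁∘λ₂) = s(λ₂)`, `t(λ₁∘λ₂) = t(λ₁)`, elements of `𝔤` act as
units, and `⟨λ₁∘λ₂, λ₁∘λ₂⟩ = ⟨λ₁,λ₁⟩ + ⟨λ₂,λ₂⟩`. -/
theorem stmt11 {K Q : Type*} [Field K] [AddCommGroup Q] [Module K Q] [FiniteDimensional K Q]
    (B : LinearMap.BilinForm K Q)
    (hBsymm : ∀ x y, B x y = B y x)
    (hBnd : ∀ x, (∀ y, B x y = 0) → x = 0)
    (𝔯 𝔤 : Submodule K Q)
    (h𝔤iso : ∀ x ∈ 𝔤, ∀ y ∈ 𝔤, B x y = 0)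
    (prr prp : Q →ₗ[K] Q)
    (hprr_mem : ∀ x, prr x ∈ 𝔯)
    (hprr_g : ∀ x, x - prr x ∈ 𝔤)
    (hprp_mem : ∀ x, ∀ r ∈ 𝔯, B (prp x) r = 0)
    (hprp_g : ∀ x, x - prp x ∈ 𝔤)
    (hdis1 : 𝔯 ⊓ 𝔤 = ⊥)
    (hdis2 : ∀ x ∈ 𝔤, (∀ r ∈ 𝔯, B x r = 0) → x = 0) :
    let s : Q → Q := fun lam => lam - prp lam
    let t : Q → Q := fun lam => lam - prr lam
    let comp : Q → Q → Q := fun l₁ l₂ => l₂ + prp l₁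
    (∀ l₁ l₂, s l₁ = t l₂ → s (comp l₁ l₂) = s l₂ ∧ t (comp l₁ l₂) = t l₁)
    ∧ (∀ l₁ l₂ l₃, s l₁ = t l₂ → s l₂ = t l₃ → comp (comp l₁ l₂) l₃ = comp l₁ (comp l₂ l₃))
    ∧ (∀ ξ ∈ 𝔤, ∀ lam, s ξ = t lam → comp ξ lam = lam)
    ∧ (∀ l₁ l₂, s l₁ = t l₂ → B (comp l₁ l₂) (comp l₁ l₂) = B l₁ l₁ + B l₂ l₂) := by
  intro s t comp
  -- prp vanishes on 𝔤
  have hprp0 : ∀ ξ ∈ 𝔤, prp ξ = 0 := by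
    intro ξ hξ
    have hmem : prp ξ ∈ 𝔤 := by
      have := Submodule.sub_mem 𝔤 hξ (hprp_g ξ)
      simpa using this
    exact hdis2 _ hmem (hprp_mem ξ)
  -- prr vanishes on 𝔤
  have hprr0 : ∀ ξ ∈ 𝔤, prr ξ = 0 := by
    intro ξ hξ
    have hmem : prr ξ ∈ 𝔤 := by
      have := Submodule.sub_mem 𝔤 hξ (hprr_g ξ)
      simpa using this
    have : prr ξ ∈ 𝔯 ⊓ 𝔤 := ⟨hprr_mem ξ, hmem⟩
    simpa [hdis1] using this
  -- prp idempotent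
  have hprp_idem : ∀ x, prp (prp x) = prp x := by
    intro x
    have hg : prp x - prp (prp x) ∈ 𝔤 := by
      have h1 := hprp_g (prp x)
      simpa using h1
    have h0 : prp x - prp (prp x) = 0 := by
      apply hdis2 _ hg
      intro r hr
      have := hprp_mem (prp x) r hr
      have := hprp_mem x r hr
      simp [map_sub, hprp_mem x r hr, hprp_mem (prp x) r hr]
    exact (sub_eq_zero.mp h0).symm
  -- prr (prp x) = prr x
  have hrp : ∀ x, prr (prp x) = prr x := by
    intro x
    have h0 : prr (x - prp x) = 0 := hprr0 _ (hprp_g x)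
    have : prr x - prr (prp x) = 0 := by simpa [map_sub] using h0
    exact (sub_eq_zero.mp this).symm
  refine ⟨?_, ?_, ?_, ?_⟩
  · intro l₁ l₂ h
    constructor
    · show l₂ + prp l₁ - prp (l₂ + prp l₁) = l₂ - prp l₂
      simp only [map_add, hprp_idem]
      abel
    · show l₂ + prp l₁ - prr (l₂ + prp l₁) = l₁ - prr l₁
      have h' : l₁ - prp l₁ = l₂ - prr l₂ := h
      simp only [map_add, hrp]
      calc l₂ + prp l₁ - (prr l₂ + prr l₁) = (l₂ - prr l₂) + prp l₁ - prr l₁ := by abel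
        _ = (l₁ - prp l₁) + prp l₁ - prr l₁ := by rw [h']
        _ = l₁ - prr l₁ := by abel
  · intro l₁ l₂ l₃ _ _
    show l₃ + prp (l₂ + prp l₁) = (l₃ + prp l₂) + prp l₁
    simp only [map_add, hprp_idem]
    abel
  · intro ξ hξ lam _
    show lam + prp ξ = lam
    simp [hprp0 ξ hξ]
  · intro l₁ l₂ h
    have h' : l₁ - prp l₁ = l₂ - prr l₂ := h
    show B (l₂ + prp l₁) (l₂ + prp l₁) = B l₁ l₁ + B l₂ l₂
    set p := prp l₁ with hp
    set g := l₁ - p with hgdef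
    have hg : g ∈ 𝔤 := hprp_g l₁
    have hgg : B g g = 0 := h𝔤iso _ hg _ hg
    have expand : ∀ a b : Q, B (a + b) (a + b) = B a a + B a b + B b a + B b b := by
      intro a b
      simp only [map_add, LinearMap.add_apply]
      ring
    have h2 : B l₂ p = B g p := by
      have hr0 : B p (prr l₂) = 0 := hprp_mem l₁ _ (hprr_mem l₂)
      have : B (l₂ - g) p = 0 := by
        rw [hBsymm]
        have : l₂ - g = prr l₂ := by
          rw [h']
          abel
        rw [this]
        exact hr0
      simp only [map_sub, LinearMap.sub_apply] at this
      linear_combination this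
    have h3 : B p l₂ = B p g := by rw [hBsymm p l₂, h2, hBsymm]
    have hl1 : l₁ = g + p := by rw [hgdef]; abel
    have hL1 : B l₁ l₁ = B g p + B p g + B p p := by
      rw [hl1, expand, hgg]
      ring
    rw [expand, hL1, h2, h3]
    ring
end

section
/- Let (𝔫,⟨·,·⟩) be a metrized Lie algebra with γ_𝔫 ∈ S²𝔫 dual to the metric, 𝔲 ⊆ 𝔫 a Lagrangian Lie subalgebra, 𝔡 a Lie algebra with ad-invariant β ∈ S²𝔡, and f_𝔫 : 𝔫 → 𝔡 a Lie algebra morphism with f_𝔫(γ_𝔫) = β, such that f_𝔫 restricts to an isomorphism of 𝔲 onto 𝔠 := f_𝔫(𝔲). Then the map 𝔫 → (𝔠 ⋉ 𝔡*_β)/(𝔠 ⋉ 𝔡*_β)^⊥, sending ζ + f_𝔫*(μ) ↦ [f_𝔫(ζ) + μ] (for ζ ∈ 𝔲, μ ∈ 𝔡*), is a well-defined isomorphism of metrized Lie algebras carrying 𝔲 onto the image of 𝔠. -/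
/-- The bracket of the semidirect product Lie algebra `𝔡̃ = 𝔡 ⋉ 𝔡*_β`. -/
noncomputable def sdBracket (K : Type*) [Field K] (𝔡 : Type*) [LieRing 𝔡] [LieAlgebra K 𝔡]
    (βsharp : Module.Dual K 𝔡 →ₗ[K] 𝔡) (p q : 𝔡 × Module.Dual K 𝔡) :
    𝔡 × Module.Dual K 𝔡 :=
  (⁅p.1, q.1⁆, coad K 𝔡 p.1 q.2 - coad K 𝔡 q.1 p.2 + coad K 𝔡 (βsharp p.2) q.2)

/-- The canonical metric of `𝔡̃ = 𝔡 ⋉ 𝔡*_β`: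
`⟨λ₁+μ₁, λ₂+μ₂⟩ = ⟨λ₁,μ₂⟩ + ⟨λ₂,μ₁⟩ + β(μ₁,μ₂)`. -/
def BtFun (K : Type*) [Field K] (𝔡 : Type*) [AddCommGroup 𝔡] [Module K 𝔡]
    (β : LinearMap.BilinForm K (Module.Dual K 𝔡)) (p q : 𝔡 × Module.Dual K 𝔡) : K :=
  q.2 p.1 + p.2 q.1 + β p.2 q.2

/-- The orthogonal complement, with respect to the metric of `𝔡̃`, of a subspace
`C ⊆ 𝔡̃ = 𝔡 ⋉ 𝔡*_β`. -/
def Bperp (K : Type*) [Field K] (𝔡 : Type*) [AddCommGroup 𝔡] [Module K 𝔡]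
    (β : LinearMap.BilinForm K (Module.Dual K 𝔡)) (C : Submodule K (𝔡 × Module.Dual K 𝔡)) :
    Submodule K (𝔡 × Module.Dual K 𝔡) where
  carrier := {p | ∀ c ∈ C, BtFun K 𝔡 β p c = 0}
  add_mem' := by
    intro a b ha hb
    intro c hc
    have h1 := ha c hc
    have h2 := hb c hc
    simp only [BtFun, Prod.fst_add, Prod.snd_add, map_add, LinearMap.add_apply] at *
    linear_combination h1 + h2
  zero_mem' := by
    intro c hc
    simp [BtFun]
  smul_mem' := by
    intro r a ha c hc
    have h1 := ha c hc
    simp only [BtFun, Prod.smul_fst, Prod.smul_snd, map_smul, LinearMap.smul_apply,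
      smul_eq_mul] at *
    linear_combination r * h1


/-! Every element of `𝔫` is `ζ + f*(μ)` with `ζ ∈ 𝔲`: nothing is orthogonal to all such sums,
since it would lie in `𝔲^⊥ = 𝔲` and in the kernel of `f`. Using `f ∘ f* = β♯` and
`f*(ad*_{f z} ν) = [z, f* ν]`, the metric and the bracket of two such sums are those of the pairs
`(f ζ, μ)` in `𝔡 ⋉ 𝔡*_β`, and these pairs exhaust `𝔠 ⋉ 𝔡*_β`. By nondegeneracy of `𝔫` the pair
`(f ζ, μ)` is then orthogonal to `𝔠 ⋉ 𝔡*_β` exactly when `ζ + f*(μ) = 0`, which makes the map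
well defined and injective at once. -/

theorem LinearMap.BilinForm.eq_top_of_orthogonal_eq_bot {K V : Type*} [Field K] [AddCommGroup V]
    [Module K V] [FiniteDimensional K V] {B : LinearMap.BilinForm K V} {W : Submodule K V}
    (h : B.orthogonal W = ⊥) : W = ⊤ := by
  have := B.finrank_add_finrank_orthogonal' W
  rw [h, finrank_bot] at this
  exact Submodule.eq_top_of_finrank_eq (le_antisymm (Submodule.finrank_le W) (by omega))

theorem LinearMap.exists_comp_eq_of_surjective {R M N Q : Type*} [Ring R] [AddCommGroup M]
    [Module R M] [AddCommGroup N] [Module R N] [AddCommGroup Q] [Module R Q] {ψ : M →ₗ[R] N}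
    (hψ : Function.Surjective ψ) {φ : M →ₗ[R] Q} (h : LinearMap.ker ψ ≤ LinearMap.ker φ) :
    ∃ g : N →ₗ[R] Q, g ∘ₗ ψ = φ :=
  ⟨(LinearMap.ker ψ).liftQ φ h ∘ₗ (ψ.quotKerEquivOfSurjective hψ).symm, by ext; simp⟩

section Reduction

variable {K 𝔫 𝔡 : Type*} [Field K] [LieRing 𝔫] [LieAlgebra K 𝔫] [LieRing 𝔡] [LieAlgebra K 𝔡]

def addFstar (U : Submodule K 𝔫) (fstar : Module.Dual K 𝔡 →ₗ[K] 𝔫) :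
    U × Module.Dual K 𝔡 →ₗ[K] 𝔫 :=
  U.subtype.coprod fstar

def toSemidirect (U : Submodule K 𝔫) (f : 𝔫 →ₗ[K] 𝔡) :
    U × Module.Dual K 𝔡 →ₗ[K] 𝔡 × Module.Dual K 𝔡 :=
  (f ∘ₗ U.subtype).prodMap LinearMap.id

@[simp]
theorem addFstar_apply (U : Submodule K 𝔫) (fstar : Module.Dual K 𝔡 →ₗ[K] 𝔫)
    (w : U × Module.Dual K 𝔡) : addFstar U fstar w = w.1 + fstar w.2 :=
  rfl

@[simp]
theorem toSemidirect_apply (U : Submodule K 𝔫) (f : 𝔫 →ₗ[K] 𝔡) (w : U × Module.Dual K 𝔡) :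
    toSemidirect U f w = (f w.1, w.2) :=
  rfl

variable {B : LinearMap.BilinForm K 𝔫} {f : 𝔫 →ₗ[K] 𝔡} {fstar : Module.Dual K 𝔡 →ₗ[K] 𝔫}
  {β : LinearMap.BilinForm K (Module.Dual K 𝔡)} {βsharp : Module.Dual K 𝔡 →ₗ[K] 𝔡}

theorem apply_fstar_eq (hBsymm : ∀ x y, B x y = B y x)
    (hfstar : ∀ μ x, B (fstar μ) x = μ (f x)) (hβpush : ∀ μ ν, β μ ν = B (fstar μ) (fstar ν))
    (hβsharp : ∀ μ ν, ν (βsharp μ) = β μ ν) (μ : Module.Dual K 𝔡) :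
    f (fstar μ) = βsharp μ := by
  refine sub_eq_zero.mp <| (Module.forall_dual_apply_eq_zero_iff K _).mp fun ν => ?_
  rw [map_sub, hβsharp, hβpush, ← hfstar, hBsymm, sub_self]

theorem fstar_coad_eq_lie (hBnd : ∀ x, (∀ y, B x y = 0) → x = 0)
    (hBinv : ∀ x y z : 𝔫, B ⁅x, y⁆ z + B y ⁅x, z⁆ = 0) (hfbr : ∀ x y : 𝔫, f ⁅x, y⁆ = ⁅f x, f y⁆)
    (hfstar : ∀ μ x, B (fstar μ) x = μ (f x)) (z : 𝔫) (ν : Module.Dual K 𝔡) :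
    fstar (coad K 𝔡 (f z) ν) = ⁅z, fstar ν⁆ := by
  refine sub_eq_zero.mp <| hBnd _ fun y => ?_
  have h := hBinv z (fstar ν) y
  rw [hfstar, hfbr] at h
  simp only [map_sub, LinearMap.sub_apply, hfstar, coad, LinearMap.neg_apply, LinearMap.coe_comp,
    Function.comp_apply, LieAlgebra.ad_apply]
  linear_combination -h

theorem bilin_add_fstar (hBsymm : ∀ x y, B x y = B y x)
    (hfstar : ∀ μ x, B (fstar μ) x = μ (f x)) (hβpush : ∀ μ ν, β μ ν = B (fstar μ) (fstar ν))
    {x y : 𝔫} (hxy : B x y = 0) (μ ν : Module.Dual K 𝔡) :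
    B (x + fstar μ) (y + fstar ν) = BtFun K 𝔡 β (f x, μ) (f y, ν) := by
  simp only [BtFun, map_add, LinearMap.add_apply, hxy, hfstar, hβpush]
  rw [hBsymm x, hfstar]
  ring

theorem lie_add_fstar (hBsymm : ∀ x y, B x y = B y x) (hBnd : ∀ x, (∀ y, B x y = 0) → x = 0)
    (hBinv : ∀ x y z : 𝔫, B ⁅x, y⁆ z + B y ⁅x, z⁆ = 0) (hfbr : ∀ x y : 𝔫, f ⁅x, y⁆ = ⁅f x, f y⁆)
    (hfstar : ∀ μ x, B (fstar μ) x = μ (f x)) (hβpush : ∀ μ ν, β μ ν = B (fstar μ) (fstar ν))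
    (hβsharp : ∀ μ ν, ν (βsharp μ) = β μ ν) (x y : 𝔫) (μ ν : Module.Dual K 𝔡) :
    ⁅x + fstar μ, y + fstar ν⁆ = ⁅x, y⁆ + fstar (sdBracket K 𝔡 βsharp (f x, μ) (f y, ν)).2 := by
  simp only [sdBracket, map_add, map_sub, ← apply_fstar_eq hBsymm hfstar hβpush hβsharp,
    fstar_coad_eq_lie hBnd hBinv hfbr hfstar]
  rw [add_lie, lie_add, lie_add, ← lie_skew y]
  abel

variable {U : Submodule K 𝔫}

theorem range_toSemidirect :
    LinearMap.range (toSemidirect U f) =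
      (U.map f).comap (LinearMap.fst K 𝔡 (Module.Dual K 𝔡)) := by
  ext ⟨d, μ⟩
  constructor
  · rintro ⟨⟨ζ, μ⟩, h⟩
    cases h
    exact ⟨ζ, ζ.2, rfl⟩
  · rintro ⟨ζ, hζ, rfl⟩
    exact ⟨(⟨ζ, hζ⟩, μ), rfl⟩

theorem addFstar_surjective [FiniteDimensional K 𝔫] (hBsymm : ∀ x y, B x y = B y x)
    (hUcoiso : ∀ x, (∀ u ∈ U, B x u = 0) → x ∈ U) (hfstar : ∀ μ x, B (fstar μ) x = μ (f x))
    (hinj : ∀ x ∈ U, f x = 0 → x = 0) : Function.Surjective (addFstar U fstar) := by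
  refine LinearMap.range_eq_top.mp <|
    LinearMap.BilinForm.eq_top_of_orthogonal_eq_bot (B := B) ?_
  refine (Submodule.eq_bot_iff _).mpr fun x hx => ?_
  have hxU : x ∈ U := hUcoiso x fun u hu => by
    simpa [hBsymm x] using hx _ ⟨(⟨u, hu⟩, 0), rfl⟩
  refine hinj x hxU <| (Module.forall_dual_apply_eq_zero_iff K _).mp fun μ => ?_
  simpa [hfstar] using hx _ ⟨(0, μ), rfl⟩

theorem bilin_addFstar (hBsymm : ∀ x y, B x y = B y x) (hUiso : ∀ x ∈ U, ∀ y ∈ U, B x y = 0)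
    (hfstar : ∀ μ x, B (fstar μ) x = μ (f x)) (hβpush : ∀ μ ν, β μ ν = B (fstar μ) (fstar ν))
    (v w : U × Module.Dual K 𝔡) :
    B (addFstar U fstar v) (addFstar U fstar w) =
      BtFun K 𝔡 β (toSemidirect U f v) (toSemidirect U f w) :=
  bilin_add_fstar hBsymm hfstar hβpush (hUiso _ v.1.2 _ w.1.2) v.2 w.2

theorem exists_addFstar_eq_lie (hUbr : ∀ x ∈ U, ∀ y ∈ U, ⁅x, y⁆ ∈ U)
    (hBsymm : ∀ x y, B x y = B y x) (hBnd : ∀ x, (∀ y, B x y = 0) → x = 0)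
    (hBinv : ∀ x y z : 𝔫, B ⁅x, y⁆ z + B y ⁅x, z⁆ = 0) (hfbr : ∀ x y : 𝔫, f ⁅x, y⁆ = ⁅f x, f y⁆)
    (hfstar : ∀ μ x, B (fstar μ) x = μ (f x)) (hβpush : ∀ μ ν, β μ ν = B (fstar μ) (fstar ν))
    (hβsharp : ∀ μ ν, ν (βsharp μ) = β μ ν) (v w : U × Module.Dual K 𝔡) :
    ∃ z, addFstar U fstar z = ⁅addFstar U fstar v, addFstar U fstar w⁆ ∧
      toSemidirect U f z = sdBracket K 𝔡 βsharp (toSemidirect U f v) (toSemidirect U f w) := by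
  refine ⟨(⟨⁅(v.1 : 𝔫), w.1⁆, hUbr _ v.1.2 _ w.1.2⟩,
    (sdBracket K 𝔡 βsharp (toSemidirect U f v) (toSemidirect U f w)).2), ?_, ?_⟩
  · exact (lie_add_fstar hBsymm hBnd hBinv hfbr hfstar hβpush hβsharp _ _ _ _).symm
  · exact Prod.ext (hfbr _ _) rfl

theorem toSemidirect_mem_Bperp_iff [FiniteDimensional K 𝔫] (hBsymm : ∀ x y, B x y = B y x)
    (hBnd : ∀ x, (∀ y, B x y = 0) → x = 0) (hULag : ∀ x, x ∈ U ↔ ∀ u ∈ U, B x u = 0)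
    (hfstar : ∀ μ x, B (fstar μ) x = μ (f x)) (hβpush : ∀ μ ν, β μ ν = B (fstar μ) (fstar ν))
    (hinj : ∀ x ∈ U, f x = 0 → x = 0) (w : U × Module.Dual K 𝔡) :
    toSemidirect U f w ∈ Bperp K 𝔡 β ((U.map f).comap (LinearMap.fst K 𝔡 (Module.Dual K 𝔡))) ↔
      addFstar U fstar w = 0 := by
  have hUiso : ∀ x ∈ U, ∀ y ∈ U, B x y = 0 := fun x hx => (hULag x).mp hx
  rw [← range_toSemidirect]
  constructor
  · intro hw
    refine hBnd _ fun y => ?_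
    obtain ⟨v, rfl⟩ := addFstar_surjective hBsymm (fun x => (hULag x).mpr) hfstar hinj y
    rw [bilin_addFstar hBsymm hUiso hfstar hβpush]
    exact hw _ ⟨v, rfl⟩
  · rintro hw _ ⟨v, rfl⟩
    rw [← bilin_addFstar hBsymm hUiso hfstar hβpush, hw, map_zero, LinearMap.zero_apply]

theorem exists_injective_addFstar_eq_mk [FiniteDimensional K 𝔫] (hBsymm : ∀ x y, B x y = B y x)
    (hBnd : ∀ x, (∀ y, B x y = 0) → x = 0) (hULag : ∀ x, x ∈ U ↔ ∀ u ∈ U, B x u = 0)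
    (hfstar : ∀ μ x, B (fstar μ) x = μ (f x)) (hβpush : ∀ μ ν, β μ ν = B (fstar μ) (fstar ν))
    (hinj : ∀ x ∈ U, f x = 0 → x = 0) :
    ∃ g : 𝔫 →ₗ[K] (𝔡 × Module.Dual K 𝔡) ⧸
        Bperp K 𝔡 β ((U.map f).comap (LinearMap.fst K 𝔡 (Module.Dual K 𝔡))),
      Function.Injective g ∧
        ∀ w, g (addFstar U fstar w) = Submodule.Quotient.mk (toSemidirect U f w) := by
  have hsurj := addFstar_surjective hBsymm (fun x => (hULag x).mpr) hfstar hinj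
  have hker := toSemidirect_mem_Bperp_iff hBsymm hBnd hULag hfstar hβpush hinj
  obtain ⟨g, hg⟩ := LinearMap.exists_comp_eq_of_surjective hsurj
    (φ := (Bperp K 𝔡 β ((U.map f).comap (LinearMap.fst K 𝔡 _))).mkQ ∘ₗ toSemidirect U f)
    fun w hw => by
      rwa [LinearMap.mem_ker, LinearMap.comp_apply, Submodule.mkQ_apply,
        Submodule.Quotient.mk_eq_zero, hker]
  refine ⟨g, (injective_iff_map_eq_zero g).mpr fun x hx => ?_, LinearMap.congr_fun hg⟩
  obtain ⟨w, rfl⟩ := hsurj x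
  rwa [← LinearMap.comp_apply, hg, LinearMap.comp_apply, Submodule.mkQ_apply,
    Submodule.Quotient.mk_eq_zero, hker] at hx

end Reduction

theorem stmt15_general {K 𝔫 𝔡 : Type*} [Field K]
    [LieRing 𝔫] [LieAlgebra K 𝔫] [FiniteDimensional K 𝔫]
    [LieRing 𝔡] [LieAlgebra K 𝔡]
    (B : LinearMap.BilinForm K 𝔫)
    (hBsymm : ∀ x y, B x y = B y x)
    (hBnd : ∀ x, (∀ y, B x y = 0) → x = 0)
    (hBinv : ∀ x y z : 𝔫, B ⁅x, y⁆ z + B y ⁅x, z⁆ = 0)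
    (U : Submodule K 𝔫)
    (hULag : ∀ x, x ∈ U ↔ ∀ u ∈ U, B x u = 0)
    (hUbr : ∀ x ∈ U, ∀ y ∈ U, ⁅x, y⁆ ∈ U)
    (β : LinearMap.BilinForm K (Module.Dual K 𝔡))
    (βsharp : Module.Dual K 𝔡 →ₗ[K] 𝔡)
    (hβsharp : ∀ μ ν, ν (βsharp μ) = β μ ν)
    (f : 𝔫 →ₗ[K] 𝔡)
    (hfbr : ∀ x y : 𝔫, f ⁅x, y⁆ = ⁅f x, f y⁆)
    (fstar : Module.Dual K 𝔡 →ₗ[K] 𝔫)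
    (hfstar : ∀ μ x, B (fstar μ) x = μ (f x))
    (hβpush : ∀ μ ν, β μ ν = B (fstar μ) (fstar ν))
    (hinj : ∀ x ∈ U, f x = 0 → x = 0) :
    -- 𝔠 = f(𝔲) and C = 𝔠 ⋉ 𝔡*_β ⊆ 𝔡̃, with orthogonal P = C^⊥ (an ideal in C)
    let 𝔠 : Submodule K 𝔡 := U.map f
    let C : Submodule K (𝔡 × Module.Dual K 𝔡) :=
      Submodule.comap (LinearMap.fst K 𝔡 (Module.Dual K 𝔡)) 𝔠
    let P : Submodule K (𝔡 × Module.Dual K 𝔡) := Bperp K 𝔡 β C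
    ∃ g : 𝔫 →ₗ[K] ((𝔡 × Module.Dual K 𝔡) ⧸ P),
      -- the map is ζ + f*(μ) ↦ [f(ζ) + μ], and is in particular well-defined
      (∀ ζ ∈ U, ∀ μ : Module.Dual K 𝔡, g (ζ + fstar μ) = Submodule.Quotient.mk (f ζ, μ))
      -- it is injective, with image the reduction (𝔠 ⋉ 𝔡*_β)/(𝔠 ⋉ 𝔡*_β)^⊥
      ∧ Function.Injective g
      ∧ (∀ p ∈ C, ∃ x : 𝔫, g x = Submodule.Quotient.mk p)
      ∧ (∀ x : 𝔫, ∃ p ∈ C, g x = Submodule.Quotient.mk p)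
      -- it preserves the metrics and the Lie brackets
      ∧ (∀ x y : 𝔫, ∀ p ∈ C, ∀ q ∈ C,
          g x = Submodule.Quotient.mk p → g y = Submodule.Quotient.mk q →
            BtFun K 𝔡 β p q = B x y
            ∧ g ⁅x, y⁆ = Submodule.Quotient.mk (sdBracket K 𝔡 βsharp p q))
      -- it carries 𝔲 onto the image of 𝔠
      ∧ Submodule.map g U =
          Submodule.map ((P.mkQ).comp (LinearMap.inl K 𝔡 (Module.Dual K 𝔡))) 𝔠 := by
  intro 𝔠 C P
  obtain ⟨g, hg_inj, hg⟩ := exists_injective_addFstar_eq_mk hBsymm hBnd hULag hfstar hβpush hinj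
  have hC : ∀ p ∈ C, ∃ w, toSemidirect U f w = p := fun p hp =>
    LinearMap.mem_range.mp (range_toSemidirect.ge hp)
  have hlift : ∀ x p, p ∈ C → g x = Submodule.Quotient.mk p →
      ∃ w, addFstar U fstar w = x ∧ toSemidirect U f w = p := by
    rintro x p hp hx
    obtain ⟨w, rfl⟩ := hC p hp
    exact ⟨w, hg_inj ((hg w).trans hx.symm), rfl⟩
  refine ⟨g, fun ζ hζ μ => hg (⟨ζ, hζ⟩, μ), hg_inj, fun p hp => ?_, fun x => ?_, ?_, ?_⟩
  · obtain ⟨w, rfl⟩ := hC p hp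
    exact ⟨_, hg w⟩
  · obtain ⟨w, rfl⟩ := addFstar_surjective hBsymm (fun x => (hULag x).mpr) hfstar hinj x
    exact ⟨_, range_toSemidirect.le (LinearMap.mem_range_self _ w), hg w⟩
  · intro x y p hp q hq hx hy
    obtain ⟨v, rfl, rfl⟩ := hlift x p hp hx
    obtain ⟨w, rfl, rfl⟩ := hlift y q hq hy
    obtain ⟨z, hz, hz'⟩ :=
      exists_addFstar_eq_lie hUbr hBsymm hBnd hBinv hfbr hfstar hβpush hβsharp v w
    refine ⟨(bilin_addFstar hBsymm (fun x hx => (hULag x).mp hx) hfstar hβpush v w).symm, ?_⟩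
    rw [← hz, hg, hz']
  · rw [← Submodule.map_comp]
    refine SetLike.coe_injective (Set.image_congr fun ζ hζ => ?_)
    simpa using hg (⟨ζ, hζ⟩, 0)

/-- Let `(𝔫,⟨·,·⟩)` be a metrized Lie algebra, `𝔲 ⊆ 𝔫` a Lagrangian Lie subalgebra,
`𝔡` a Lie algebra with ad-invariant `β ∈ S²𝔡`, and `f𝔫 : 𝔫 → 𝔡` a Lie algebra morphism
with `f𝔫(γ_𝔫) = β` restricting to an isomorphism of `𝔲` onto `𝔠 := f𝔫(𝔲)`.
Then `ζ + f𝔫*(μ) ↦ [f𝔫(ζ) + μ]` is a well-defined isomorphism of metrized Lie algebras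
from `𝔫` onto the reduction `(𝔠 ⋉ 𝔡*_β)/(𝔠 ⋉ 𝔡*_β)^⊥` of `𝔡̃ = 𝔡 ⋉ 𝔡*_β`,
carrying `𝔲` onto the image of `𝔠`. -/
theorem stmt15 {K 𝔫 𝔡 : Type*} [Field K]
    [LieRing 𝔫] [LieAlgebra K 𝔫] [FiniteDimensional K 𝔫]
    [LieRing 𝔡] [LieAlgebra K 𝔡] [FiniteDimensional K 𝔡]
    (B : LinearMap.BilinForm K 𝔫)
    (hBsymm : ∀ x y, B x y = B y x)
    (hBnd : ∀ x, (∀ y, B x y = 0) → x = 0)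
    (hBinv : ∀ x y z : 𝔫, B ⁅x, y⁆ z + B y ⁅x, z⁆ = 0)
    (U : Submodule K 𝔫)
    (hULag : ∀ x, x ∈ U ↔ ∀ u ∈ U, B x u = 0)
    (hUbr : ∀ x ∈ U, ∀ y ∈ U, ⁅x, y⁆ ∈ U)
    (β : LinearMap.BilinForm K (Module.Dual K 𝔡))
    (hβsymm : ∀ μ ν, β μ ν = β ν μ)
    (hβinv : ∀ (x : 𝔡) μ ν, β (coad K 𝔡 x μ) ν + β μ (coad K 𝔡 x ν) = 0)
    (βsharp : Module.Dual K 𝔡 →ₗ[K] 𝔡)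
    (hβsharp : ∀ μ ν, ν (βsharp μ) = β μ ν)
    (f : 𝔫 →ₗ[K] 𝔡)
    (hfbr : ∀ x y : 𝔫, f ⁅x, y⁆ = ⁅f x, f y⁆)
    (fstar : Module.Dual K 𝔡 →ₗ[K] 𝔫)
    (hfstar : ∀ μ x, B (fstar μ) x = μ (f x))
    (hβpush : ∀ μ ν, β μ ν = B (fstar μ) (fstar ν))
    (hinj : ∀ x ∈ U, f x = 0 → x = 0) :
    -- 𝔠 = f(𝔲) and C = 𝔠 ⋉ 𝔡*_β ⊆ 𝔡̃, with orthogonal P = C^⊥ (an ideal in C)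
    let 𝔠 : Submodule K 𝔡 := U.map f
    let C : Submodule K (𝔡 × Module.Dual K 𝔡) :=
      Submodule.comap (LinearMap.fst K 𝔡 (Module.Dual K 𝔡)) 𝔠
    let P : Submodule K (𝔡 × Module.Dual K 𝔡) := Bperp K 𝔡 β C
    ∃ g : 𝔫 →ₗ[K] ((𝔡 × Module.Dual K 𝔡) ⧸ P),
      -- the map is ζ + f*(μ) ↦ [f(ζ) + μ], and is in particular well-defined
      (∀ ζ ∈ U, ∀ μ : Module.Dual K 𝔡, g (ζ + fstar μ) = Submodule.Quotient.mk (f ζ, μ))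
      -- it is injective, with image the reduction (𝔠 ⋉ 𝔡*_β)/(𝔠 ⋉ 𝔡*_β)^⊥
      ∧ Function.Injective g
      ∧ (∀ p ∈ C, ∃ x : 𝔫, g x = Submodule.Quotient.mk p)
      ∧ (∀ x : 𝔫, ∃ p ∈ C, g x = Submodule.Quotient.mk p)
      -- it preserves the metrics and the Lie brackets
      ∧ (∀ x y : 𝔫, ∀ p ∈ C, ∀ q ∈ C,
          g x = Submodule.Quotient.mk p → g y = Submodule.Quotient.mk q →
            BtFun K 𝔡 β p q = B x y
            ∧ g ⁅x, y⁆ = Submodule.Quotient.mk (sdBracket K 𝔡 βsharp p q))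
      -- it carries 𝔲 onto the image of 𝔠
      ∧ Submodule.map g U =
          Submodule.map ((P.mkQ).comp (LinearMap.inl K 𝔡 (Module.Dual K 𝔡))) 𝔠 :=
  stmt15_general B hBsymm hBnd hBinv U hULag hUbr β βsharp hβsharp f hfbr fstar hfstar hβpush hinj
end

section
/- Let Q ⇉ 𝔤 be the metrized linear groupoid (Q with nondegenerate symmetric form, 𝔯 ⊆ Q, 𝔤 a complement to both 𝔯 and 𝔯^⊥, source s = 1 − pr_{𝔯^⊥}, target t = 1 − pr_𝔯, composition λ₁∘λ₂ = λ₂ + pr_{𝔯^⊥}(λ₁)) acting on a metrized vector space 𝔭 via a moment map u : 𝔭 → 𝔤 compatibly with metrics, i.e. the action λ ∘ z is defined when s(λ) = u(z) and satisfies ⟨λ∘z, λ∘z⟩ = ⟨λ,λ⟩ + ⟨z,z⟩ and u(λ∘z) = t(λ), together with u(z) ∘ z = z. Then the action is necessarily given by λ ∘ z = z + F(λ), where F : Q → 𝔭 is defined by ⟨F(λ), w⟩ = ⟨λ, u(w)⟩_Q for all w ∈ 𝔭 (pairing via the metric on Q). -/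
/-- Let the metrized linear groupoid `Q ⇉ 𝔤` (source `s = 1 − pr_{𝔯^⊥}`, target
`t = 1 − pr_𝔯`) act on a metrized vector space `𝔭` via a moment map `u : 𝔭 → 𝔤 ⊆ Q`,
compatibly with metrics: the action `λ ∘ z = act λ z` is considered when `s(λ) = u(z)`
and satisfies `⟨λ∘z, λ∘z⟩ = ⟨λ,λ⟩ + ⟨z,z⟩` (together with its polarized pairing identity),
`u(λ∘z) = t(λ)`, and `u(z) ∘ z = z`.  Then necessarily `λ ∘ z = z + F(λ)`, where
`F : Q → 𝔭` is defined by `⟨F(λ), w⟩_𝔭 = ⟨λ, u(w)⟩_Q`. -/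
theorem stmt19 {K Q P : Type*} [Field K]
    [AddCommGroup Q] [Module K Q] [FiniteDimensional K Q]
    [AddCommGroup P] [Module K P] [FiniteDimensional K P]
    (BQ : LinearMap.BilinForm K Q)
    (hBQsymm : ∀ x y, BQ x y = BQ y x)
    (hBQnd : ∀ x, (∀ y, BQ x y = 0) → x = 0)
    (BP : LinearMap.BilinForm K P)
    (hBPsymm : ∀ z w, BP z w = BP w z)
    (hBPnd : ∀ z, (∀ w, BP z w = 0) → z = 0)
    (𝔯 𝔤 : Submodule K Q)
    (prr prp : Q →ₗ[K] Q)
    (hprr_mem : ∀ x, prr x ∈ 𝔯)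
    (hprr_g : ∀ x, x - prr x ∈ 𝔤)
    (hprp_mem : ∀ x, ∀ r ∈ 𝔯, BQ (prp x) r = 0)
    (hprp_g : ∀ x, x - prp x ∈ 𝔤)
    (hdis1 : 𝔯 ⊓ 𝔤 = ⊥)
    (hdis2 : ∀ x ∈ 𝔤, (∀ r ∈ 𝔯, BQ x r = 0) → x = 0)
    (u : P →ₗ[K] Q)
    (hu𝔤 : ∀ z, u z ∈ 𝔤)
    (act : Q → P → P)
    (F : Q → P)
    (hF : ∀ lam w, BP (F lam) w = BQ lam (u w))
    -- `u(z) ∘ z = z`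
    (hunit : ∀ z, act (u z) z = z)
    -- `u(λ∘z) = t(λ)` for composable pairs
    (hmom : ∀ lam z, lam - prp lam = u z → u (act lam z) = lam - prr lam)
    -- metric compatibility `⟨λ∘z, λ∘z⟩ = ⟨λ,λ⟩ + ⟨z,z⟩`
    (hquad : ∀ lam z, lam - prp lam = u z →
      BP (act lam z) (act lam z) = BQ lam lam + BP z z)
    -- and its polarized pairing identity
    (hpair : ∀ lam₁ z₁ lam₂ z₂, lam₁ - prp lam₁ = u z₁ → lam₂ - prp lam₂ = u z₂ →
      BP (act lam₁ z₁) (act lam₂ z₂) = BQ lam₁ lam₂ + BP z₁ z₂) :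
    ∀ lam z, lam - prp lam = u z → act lam z = z + F lam := by
  intro lam z hcomp
  have hprpu : ∀ w : P, prp (u w) = 0 := by
    intro w
    apply hdis2
    · have h1 : u w - (u w - prp (u w)) ∈ 𝔤 := Submodule.sub_mem _ (hu𝔤 w) (hprp_g (u w))
      simpa using h1
    · intro r hr; exact hprp_mem (u w) r hr
  have key : ∀ w : P, BP (act lam z) w = BP (z + F lam) w := by
    intro w
    have hcomp2 : u w - prp (u w) = u w := by rw [hprpu w, sub_zero]
    have := hpair lam z (u w) w hcomp hcomp2
    rw [hunit w] at this
    rw [this, map_add, LinearMap.add_apply, hF lam w, hBQsymm lam (u w)]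
    ring
  have hz : act lam z - (z + F lam) = 0 := by
    apply hBPnd
    intro w
    rw [map_sub, LinearMap.sub_apply, key w, sub_self]
  exact sub_eq_zero.mp hz
end
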